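/- Let θ be irrational with 1 < θ < 2, and suppose that the convergents p_k/q_k of θ satisfy q_k·|q_kθ − p_k| > 3·q_{k+1}·|q_{k+1}θ − p_{k+1}| for all sufficiently large k. Set v_k = (q_kθ − p_k, q_k + p_kθ) for each k ≥ 0. Then ω̂̂(Λ_θ) = sup{ γ ∈ ℝ : there exists K ∈ ℕ such that Π(v_k) ≤ |v_{k+1}|^{−γ} for all k ≥ K }. -/

import Mathlib

open Filter

/-- sup-norm of a point of `ℝ²`. -/
noncomputable def latNorm (z : ℝ × ℝ) : ℝ := max |z.1| |z.2|

/-- `Π(z) = (|z₁|·|z₂|)^(1/2)`. -/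
noncomputable def latProd (z : ℝ × ℝ) : ℝ := (|z.1| * |z.2|) ^ ((1 : ℝ) / 2)

/-- The lattice `Λ_θ = {(θq − p, q + θp) : (q, p) ∈ ℤ²}`. -/
def latticeOf (θ : ℝ) : Set (ℝ × ℝ) :=
  {z | ∃ q p : ℤ, z = (θ * (q : ℝ) - (p : ℝ), (q : ℝ) + θ * (p : ℝ))}

/-- The weak uniform Diophantine exponent of a lattice `Λ ⊆ ℝ²`:
the supremum (in `EReal`) of real `γ` such that for every sufficiently large `t`
there is a nonzero `z ∈ Λ` with `|z| ≤ t` and `Π(z) ≤ t^(−γ)`. -/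
noncomputable def weakUniformExpLat (Λ : Set (ℝ × ℝ)) : EReal :=
  sSup {g : EReal | ∃ γ : ℝ, g = (γ : EReal) ∧
    ∀ᶠ t : ℝ in atTop, ∃ z ∈ Λ, z ≠ 0 ∧ latNorm z ≤ t ∧ latProd z ≤ t ^ (-γ)}


private lemma twoStepInduction {P : ℕ → Prop} (h0 : P 0) (h1 : P 1)
    (hs : ∀ n, P n → P (n + 1) → P (n + 2)) : ∀ n, P n := by
  have : ∀ n, P n ∧ P (n + 1) := by
    intro n
    induction n with
    | zero => exact ⟨h0, h1⟩
    | succ m ih => exact ⟨ih.2, hs m ih.1 ih.2⟩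
  exact fun n => (this n).1

/-- All the continued-fraction facts we need. -/
structure CFFacts (θ : ℝ) (p q : ℕ → ℝ) : Prop where
  int : ∀ n, (∃ a : ℤ, p n = (a : ℝ)) ∧ (∃ b : ℤ, q n = (b : ℝ))
  pos_p : ∀ n, 1 ≤ p n
  pos_q : ∀ n, 1 ≤ q n
  mono_p : ∀ n, p n ≤ p (n + 1)
  mono_q : ∀ n, q n ≤ q (n + 1)
  grow : ∀ n : ℕ, (n : ℝ) ≤ 2 * q n
  p0 : p 0 = 1
  q0 : q 0 = 1
  eta_pos : ∀ n, 0 < |q n * θ - p n|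
  eta_le : ∀ n, |q n * θ - p n| * q (n + 1) ≤ 1
  det : ∀ n, p n * q (n + 1) - q n * p (n + 1) = (-1 : ℝ) ^ (n + 1)
  pbound : ∀ n, p n ≤ 3 * q n

section Facts

variable {θ : ℝ} {p q : ℕ → ℝ}

lemma cf_notTerm (hθ : Irrational θ) (n : ℕ) :
    ¬(GenContFract.of θ).TerminatedAt n := by
  intro h
  rcases (GenContFract.terminates_iff_rat θ).1 ⟨n, h⟩ with ⟨r, hr⟩
  exact hθ ⟨r, hr.symm⟩

lemma cf_facts (hθ : Irrational θ) (h1 : 1 < θ) (h2 : θ < 2)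
    (hp : p = (GenContFract.of θ).nums) (hq : q = (GenContFract.of θ).dens) :
    CFFacts θ p q := by
  have hfloor : (GenContFract.of θ).h = 1 := by
    rw [GenContFract.of_h_eq_floor]
    norm_cast
    rw [Int.floor_eq_iff]
    push_cast
    exact ⟨h1.le, by linarith⟩
  have hp0 : p 0 = 1 := by rw [hp, GenContFract.zeroth_num_eq_h, hfloor]
  have hq0 : q 0 = 1 := by rw [hq]; exact GenContFract.zeroth_den_eq_one
  -- the partial denominators
  have hgp : ∀ n, ∃ gp : GenContFract.Pair ℝ, (GenContFract.of θ).s.get? n = some gp ∧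
      gp.a = 1 ∧ (∃ z : ℤ, gp.b = (z : ℝ)) ∧ 1 ≤ gp.b := by
    intro n
    obtain ⟨gp, hgp⟩ : ∃ gp, (GenContFract.of θ).s.get? n = some gp :=
      Option.ne_none_iff_exists'.1 (cf_notTerm hθ n)
    obtain ⟨ha, hzb⟩ := GenContFract.of_partNum_eq_one_and_exists_int_partDen_eq hgp
    have hb1 : 1 ≤ gp.b :=
      GenContFract.of_one_le_get?_partDen (GenContFract.partDen_eq_s_b hgp)
    exact ⟨gp, hgp, ha, hzb, hb1⟩
  -- first terms
  obtain ⟨gp0, hgp0, ha0, ⟨z0, hz0⟩, hb0⟩ := hgp 0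
  have hq1 : q 1 = gp0.b := by rw [hq]; exact GenContFract.first_den_eq hgp0
  have hp1 : p 1 = gp0.b + 1 := by
    rw [hp, GenContFract.first_num_eq hgp0, hfloor, ha0]; ring
  -- recurrence
  have hrec : ∀ n, ∃ b : ℝ, (∃ z : ℤ, b = (z : ℝ)) ∧ 1 ≤ b ∧
      q (n + 2) = b * q (n + 1) + q n ∧ p (n + 2) = b * p (n + 1) + p n := by
    intro n
    obtain ⟨gp, hgpn, ha, hzb, hb1⟩ := hgp (n + 1)
    refine ⟨gp.b, hzb, hb1, ?_, ?_⟩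
    · rw [hq, GenContFract.dens_recurrence hgpn rfl rfl, ha]; ring
    · rw [hp, GenContFract.nums_recurrence hgpn rfl rfl, ha]; ring
  -- integrality, positivity
  have base : ∀ n, ((∃ a : ℤ, p n = (a : ℝ)) ∧ (∃ b : ℤ, q n = (b : ℝ)))
      ∧ (1 ≤ p n ∧ 1 ≤ q n) := by
    apply twoStepInduction
    · exact ⟨⟨⟨1, by rw [hp0]; norm_num⟩, ⟨1, by rw [hq0]; norm_num⟩⟩, by
        rw [hp0, hq0]; norm_num⟩
    · refine ⟨⟨⟨z0 + 1, by rw [hp1, hz0]; push_cast; ring⟩, ⟨z0, by rw [hq1, hz0]⟩⟩, ?_⟩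
      constructor
      · rw [hp1]; linarith
      · rw [hq1]; linarith
    · rintro n ⟨⟨⟨a, hpa⟩, ⟨b, hqb⟩⟩, hp1n, hq1n⟩ ⟨⟨⟨a', hpa'⟩, ⟨b', hqb'⟩⟩, hp1n', hq1n'⟩
      obtain ⟨c, ⟨zc, hzc⟩, hc1, hqrec, hprec⟩ := hrec n
      refine ⟨⟨⟨zc * a' + a, ?_⟩, ⟨zc * b' + b, ?_⟩⟩, ?_, ?_⟩
      · rw [hprec, hzc, hpa, hpa']; push_cast; ring
      · rw [hqrec, hzc, hqb, hqb']; push_cast; ring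
      · rw [hprec]; nlinarith
      · rw [hqrec]; nlinarith
  have pos_p : ∀ n, 1 ≤ p n := fun n => (base n).2.1
  have pos_q : ∀ n, 1 ≤ q n := fun n => (base n).2.2
  have mono_p : ∀ n, p n ≤ p (n + 1) := by
    intro n
    match n with
    | 0 => rw [hp0, hp1]; linarith
    | Nat.succ m =>
      obtain ⟨c, _, hc1, _, hprec⟩ := hrec m
      rw [hprec]; nlinarith [pos_p m, pos_p (m + 1)]
  have mono_q : ∀ n, q n ≤ q (n + 1) := by
    intro n
    match n with
    | 0 => rw [hq0, hq1]; linarith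
    | Nat.succ m =>
      obtain ⟨c, _, hc1, hqrec, _⟩ := hrec m
      rw [hqrec]; nlinarith [pos_q m, pos_q (m + 1)]
  have grow : ∀ n : ℕ, (n : ℝ) ≤ 2 * q n := by
    apply twoStepInduction
    · rw [hq0]; norm_num
    · rw [hq1]; push_cast; linarith
    · intro n ihn ihn1
      obtain ⟨c, _, hc1, hqrec, _⟩ := hrec n
      have h1n : 1 ≤ q (n + 1) := pos_q (n + 1)
      rw [hqrec]; push_cast; nlinarith
  -- approximation bound
  have eta_le : ∀ n, |q n * θ - p n| * q (n + 1) ≤ 1 := by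
    intro n
    have h := GenContFract.abs_sub_convs_le (v := θ) (n := n) (cf_notTerm hθ n)
    rw [GenContFract.conv_eq_num_div_den, ← hp, ← hq] at h
    have hqn : (0 : ℝ) < q n := zero_lt_one.trans_le (pos_q n)
    have hqn1 : (0 : ℝ) < q (n + 1) := zero_lt_one.trans_le (pos_q (n + 1))
    have key0 : q n * θ - p n = (θ - p n / q n) * q n := by
      field_simp
    have key : |q n * θ - p n| = |θ - p n / q n| * q n := by
      rw [key0, abs_mul, abs_of_pos hqn]
    rw [key]
    calc |θ - p n / q n| * q n * q (n + 1)
        ≤ 1 / (q n * q (n + 1)) * (q n * q (n + 1)) := by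
          rw [mul_assoc]
          exact mul_le_mul_of_nonneg_right h (by positivity)
      _ = 1 := by field_simp
  have eta_pos : ∀ n, 0 < |q n * θ - p n| := by
    intro n
    rcases (base n).1 with ⟨⟨a, hpa⟩, ⟨b, hqb⟩⟩
    have hqn : (0 : ℝ) < q n := zero_lt_one.trans_le (pos_q n)
    rw [abs_pos]
    intro hzero
    apply hθ
    refine ⟨(a : ℚ) / (b : ℚ), ?_⟩
    have hb : (b : ℝ) ≠ 0 := by rw [← hqb]; exact hqn.ne'
    rw [Rat.cast_div, Rat.cast_intCast, Rat.cast_intCast, div_eq_iff hb, ← hqb, ← hpa]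
    linarith [hzero]
  -- determinant
  have det : ∀ n, p n * q (n + 1) - q n * p (n + 1) = (-1 : ℝ) ^ (n + 1) := by
    intro n
    have h := SimpContFract.determinant (s := SimpContFract.of θ) (n := n)
      (cf_notTerm hθ n)
    rw [hp, hq]
    exact h
  have pbound : ∀ n, p n ≤ 3 * q n := by
    intro n
    have h := eta_le n
    have hqn1 : (1 : ℝ) ≤ q (n + 1) := pos_q (n + 1)
    have habs : |q n * θ - p n| ≤ 1 := by nlinarith [abs_nonneg (q n * θ - p n)]
    have := neg_abs_le (q n * θ - p n)
    have hqn : (1 : ℝ) ≤ q n := pos_q n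
    nlinarith
  exact ⟨fun n => (base n).1, pos_p, pos_q, mono_p, mono_q, grow, hp0, hq0,
    eta_pos, eta_le, det, pbound⟩

end Facts

noncomputable def etaF (θ : ℝ) (p q : ℕ → ℝ) (n : ℕ) : ℝ := |q n * θ - p n|

noncomputable def AF (θ : ℝ) (p q : ℕ → ℝ) (n : ℕ) : ℝ := q n + θ * p n

noncomputable def DF (θ : ℝ) (p q : ℕ → ℝ) (n : ℕ) : ℝ := q n * etaF θ p q n

section Derived

variable {θ : ℝ} {p q : ℕ → ℝ} (F : CFFacts θ p q) (h1 : 1 < θ) (h2 : θ < 2)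

include F h1 in
lemma A_ge_two (n : ℕ) : 2 ≤ AF θ p q n := by
  have := F.pos_p n; have := F.pos_q n
  unfold AF; nlinarith

include F h1 in
lemma A_ge_q (n : ℕ) : q n ≤ AF θ p q n := by
  have := F.pos_p n; unfold AF; nlinarith

include F h1 h2 in
lemma A_le (n : ℕ) : AF θ p q n ≤ 7 * q n := by
  have := F.pos_p n; have := F.pos_q n; have := F.pbound n
  unfold AF; nlinarith

include F h1 in
lemma A_mono (n : ℕ) : AF θ p q n ≤ AF θ p q (n + 1) := by
  have := F.mono_p n; have := F.mono_q n
  unfold AF; nlinarith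

include F h1 in
lemma A_unbounded : ∀ C : ℝ, ∃ n : ℕ, C < AF θ p q n := by
  intro C
  obtain ⟨n, hn⟩ := exists_nat_gt (2 * C)
  refine ⟨n, ?_⟩
  have h := F.grow n
  have := A_ge_q F h1 n
  linarith

include F in
lemma eta_le_one (n : ℕ) : etaF θ p q n ≤ 1 := by
  have h := F.eta_le n
  have h1n := F.pos_q (n + 1)
  have : 0 ≤ etaF θ p q n := abs_nonneg _
  unfold etaF at *
  nlinarith

include F in
lemma eta_posF (n : ℕ) : 0 < etaF θ p q n := F.eta_pos n

include F in
lemma D_pos (n : ℕ) : 0 < DF θ p q n :=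
  mul_pos (zero_lt_one.trans_le (F.pos_q n)) (F.eta_pos n)

include F h1 h2 in
lemma etaA_le (n : ℕ) : etaF θ p q n * AF θ p q n ≤ 7 * DF θ p q n := by
  have h := A_le F h1 h2 n
  have h0 := eta_posF F n
  unfold DF
  calc etaF θ p q n * AF θ p q n ≤ etaF θ p q n * (7 * q n) :=
        mul_le_mul_of_nonneg_left h h0.le
    _ = 7 * (q n * etaF θ p q n) := by ring

include F h1 in
lemma D_le_etaA (n : ℕ) : DF θ p q n ≤ etaF θ p q n * AF θ p q n := by
  have h := A_ge_q F h1 n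
  have h0 := eta_posF F n
  unfold DF
  calc q n * etaF θ p q n = etaF θ p q n * q n := by ring
    _ ≤ etaF θ p q n * AF θ p q n := mul_le_mul_of_nonneg_left h h0.le

include F in
lemma D_anti {K : ℕ} (hK : ∀ k ≥ K, 3 * DF θ p q (k + 1) < DF θ p q k) :
    ∀ j k : ℕ, K ≤ j → j ≤ k → DF θ p q k ≤ DF θ p q j := by
  intro j k hKj hjk
  induction k with
  | zero =>
    have hj0 : j = 0 := Nat.le_zero.mp hjk
    rw [hj0]
  | succ m ih =>
    rcases Nat.lt_or_ge j (m + 1) with hlt | hge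
    · have hjm : j ≤ m := by omega
      have h3 := hK m (le_trans hKj hjm)
      have hD := D_pos F (m + 1)
      have := ih hjm
      linarith
    · have : j = m + 1 := by omega
      rw [this]

include F in
lemma D_small {K : ℕ} (hK : ∀ k ≥ K, 3 * DF θ p q (k + 1) < DF θ p q k) :
    ∀ ε : ℝ, 0 < ε → ∃ N : ℕ, ∀ k ≥ N, DF θ p q k ≤ ε := by
  intro ε hε
  have hgeom : ∀ m : ℕ, DF θ p q (K + m) ≤ DF θ p q K * (1 / 3) ^ m := by
    intro m
    induction m with
    | zero => simp
    | succ m ih =>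
      have h3 := hK (K + m) (Nat.le_add_right _ _)
      have : DF θ p q (K + (m + 1)) ≤ DF θ p q (K + m) / 3 := by
        have : K + m + 1 = K + (m + 1) := by omega
        rw [← this]; linarith
      calc DF θ p q (K + (m + 1)) ≤ DF θ p q (K + m) / 3 := this
        _ ≤ (DF θ p q K * (1 / 3) ^ m) / 3 := by linarith
        _ = DF θ p q K * (1 / 3) ^ (m + 1) := by ring
  have hDK := D_pos F K
  obtain ⟨m, hm⟩ := exists_pow_lt_of_lt_one (div_pos hε hDK) (by norm_num : (1 / 3 : ℝ) < 1)
  refine ⟨K + m, fun k hk => ?_⟩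
  have h1 : DF θ p q k ≤ DF θ p q (K + m) :=
    D_anti F hK (K + m) k (Nat.le_add_right _ _) hk
  have h2 : DF θ p q K * (1 / 3) ^ m < ε := by
    rw [lt_div_iff₀ hDK] at hm
    linarith [hm]
  linarith [hgeom m]

end Derived

lemma exists_min_lt (f : ℕ → ℝ) (hf : ∀ n, 0 < f n) (K : ℕ) :
    ∃ c : ℝ, 0 < c ∧ ∀ j, j < K → c ≤ f j := by
  induction K with
  | zero => exact ⟨1, one_pos, fun j hj => absurd hj (Nat.not_lt_zero j)⟩
  | succ m ih =>
    obtain ⟨c, hc, hcf⟩ := ih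
    refine ⟨min c (f m), lt_min hc (hf m), fun j hj => ?_⟩
    rcases Nat.lt_or_ge j m with h | h
    · exact le_trans (min_le_left _ _) (hcf j h)
    · have : j = m := by omega
      rw [this]
      exact min_le_right _ _

/-- The pairing (determinant) inequality. -/
lemma pairing (θ x y a b zq zp : ℝ) (hx : x = θ * zq - zp) (hy : y = zq + θ * zp) :
    (1 + θ ^ 2) * |zq * b - zp * a| ≤ |x| * |a + θ * b| + |y| * |θ * a - b| := by
  have key : (1 + θ ^ 2) * (zq * b - zp * a) = x * (a + θ * b) - y * (θ * a - b) := by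
    rw [hx, hy]; ring
  calc (1 + θ ^ 2) * |zq * b - zp * a|
      = |(1 + θ ^ 2) * (zq * b - zp * a)| := by
        rw [abs_mul, abs_of_pos (by positivity : (0:ℝ) < 1 + θ ^ 2)]
    _ = |x * (a + θ * b) - y * (θ * a - b)| := by rw [key]
    _ ≤ |x * (a + θ * b)| + |y * (θ * a - b)| := abs_sub _ _
    _ = |x| * |a + θ * b| + |y| * |θ * a - b| := by rw [abs_mul, abs_mul]

section Key

variable {θ : ℝ} {p q : ℕ → ℝ}

set_option maxHeartbeats 1600000 in
lemma key_lemma (F : CFFacts θ p q) (h1 : 1 < θ) (h2 : θ < 2)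
    {K₁ : ℕ} (hK : ∀ k ≥ K₁, 3 * DF θ p q (k + 1) < DF θ p q k) :
    ∃ K₂ : ℕ, ∀ k ≥ K₂, ∀ zq zp : ℤ, ¬(zq = 0 ∧ zp = 0) →
      max |θ * (zq : ℝ) - (zp : ℝ)| |(zq : ℝ) + θ * (zp : ℝ)| < AF θ p q (k + 1) →
      etaF θ p q k * AF θ p q k ≤
        9 * (|θ * (zq : ℝ) - (zp : ℝ)| * |(zq : ℝ) + θ * (zp : ℝ)|) := by
  classical
  obtain ⟨c, hc, hcmin⟩ := exists_min_lt (DF θ p q) (D_pos F) K₁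
  obtain ⟨N, hN⟩ := D_small F hK (min (1 / 7) c) (lt_min (by norm_num) hc)
  refine ⟨max K₁ N, fun k hk zq zp hz hM => ?_⟩
  have hkK₁ : K₁ ≤ k := le_trans (le_max_left _ _) hk
  have hkN : N ≤ k := le_trans (le_max_right _ _) hk
  have hDk : DF θ p q k ≤ min (1 / 7) c := hN k hkN
  have hDk1 : DF θ p q (k + 1) ≤ 1 / 7 :=
    le_trans (hN (k + 1) (by omega)) (min_le_left _ _)
  set X := |θ * (zq : ℝ) - (zp : ℝ)| with hXdef
  set Y := |(zq : ℝ) + θ * (zp : ℝ)| with hYdef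
  have hX0 : 0 ≤ X := abs_nonneg _
  have hY0 : 0 ≤ Y := abs_nonneg _
  have hXM : X < AF θ p q (k + 1) := lt_of_le_of_lt (le_max_left _ _) hM
  have hYM : Y < AF θ p q (k + 1) := lt_of_le_of_lt (le_max_right _ _) hM
  -- positivity facts
  have hqpos : ∀ j, (0:ℝ) < q j := fun j => zero_lt_one.trans_le (F.pos_q j)
  have hApos : ∀ j, (0:ℝ) < AF θ p q j := fun j => lt_of_lt_of_le two_pos (A_ge_two F h1 j)
  have hepos : ∀ j, (0:ℝ) < etaF θ p q j := fun j => F.eta_pos j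
  -- abs values of convergent vectors
  have e1 : ∀ j, |q j + θ * p j| = AF θ p q j := fun j => abs_of_pos (hApos j)
  have e2 : ∀ j, |θ * q j - p j| = etaF θ p q j := by
    intro j; unfold etaF; rw [mul_comm θ (q j)]
  have e3 : ∀ j, |-(p j) + θ * q j| = etaF θ p q j := by
    intro j; rw [← e2 j]; congr 1; ring
  have e4 : ∀ j, |θ * -(p j) - q j| = AF θ p q j := by
    intro j
    rw [← e1 j, ← abs_neg (θ * -(p j) - q j)]; congr 1; ring
  -- pairing consequences
  have hP : ∀ j, (zq : ℝ) * p j - (zp : ℝ) * q j ≠ 0 →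
      2 ≤ X * AF θ p q j + Y * etaF θ p q j := by
    intro j hne
    obtain ⟨⟨a, ha⟩, ⟨b, hb⟩⟩ := F.int j
    have hm : (zq : ℝ) * p j - (zp : ℝ) * q j = ((zq * a - zp * b : ℤ) : ℝ) := by
      rw [ha, hb]; push_cast; ring
    have hm0 : (zq * a - zp * b : ℤ) ≠ 0 := by
      intro h0; rw [hm, h0] at hne; exact hne (by norm_num)
    have hm1 : (1:ℝ) ≤ |(zq : ℝ) * p j - (zp : ℝ) * q j| := by
      rw [hm]
      rw [← Int.cast_abs]
      exact_mod_cast Int.one_le_abs hm0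
    have hpair := pairing θ (θ * (zq:ℝ) - zp) ((zq:ℝ) + θ * zp) (q j) (p j) zq zp rfl rfl
    rw [e1 j, e2 j] at hpair
    have h2θ : 2 ≤ 1 + θ ^ 2 := by nlinarith
    nlinarith [hpair, hm1, h2θ]
  have hQ : ∀ j, (zq : ℝ) * q j + (zp : ℝ) * p j ≠ 0 →
      2 ≤ X * etaF θ p q j + Y * AF θ p q j := by
    intro j hne
    obtain ⟨⟨a, ha⟩, ⟨b, hb⟩⟩ := F.int j
    have hm : (zq : ℝ) * q j + (zp : ℝ) * p j = ((zq * b + zp * a : ℤ) : ℝ) := by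
      rw [ha, hb]; push_cast; ring
    have hm0 : (zq * b + zp * a : ℤ) ≠ 0 := by
      intro h0; rw [hm, h0] at hne; exact hne (by norm_num)
    have hm1 : (1:ℝ) ≤ |(zq : ℝ) * q j + (zp : ℝ) * p j| := by
      rw [hm, ← Int.cast_abs]
      exact_mod_cast Int.one_le_abs hm0
    have hpair := pairing θ (θ * (zq:ℝ) - zp) ((zq:ℝ) + θ * zp) (-(p j)) (q j) zq zp rfl rfl
    rw [e3 j, e4 j] at hpair
    have hcomb : |(zq:ℝ) * q j - (zp:ℝ) * -(p j)| = |(zq : ℝ) * q j + (zp : ℝ) * p j| := by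
      congr 1; ring
    rw [hcomb] at hpair
    have h2θ : 2 ≤ 1 + θ ^ 2 := by nlinarith
    nlinarith [hpair, hm1, h2θ]
  -- the minimum of D over indices ≤ k
  have hminD : ∀ j, j ≤ k → min c (DF θ p q k) ≤ DF θ p q j := by
    intro j hj
    rcases Nat.lt_or_ge j K₁ with h | h
    · exact le_trans (min_le_left _ _) (hcmin j h)
    · exact le_trans (min_le_right _ _) (D_anti F hK j k h hj)
  -- the main claim
  have claim : min (1/9 : ℝ) (min c (DF θ p q k)) ≤ X * Y := by
    by_cases hv : ∃ j, j ≤ k + 1 ∧ (zq : ℝ) * p j - (zp : ℝ) * q j = 0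
    · -- z is parallel to v_j
      obtain ⟨j, hjk1, hEj⟩ := hv
      have hqj := hqpos j
      set lam := (zq : ℝ) / q j with hlam
      have hzq' : (zq : ℝ) = lam * q j := by rw [hlam, div_mul_cancel₀ _ hqj.ne']
      have hzp' : (zp : ℝ) = lam * p j := by
        rw [hlam]; field_simp; nlinarith [hEj]
      have hlam0 : lam ≠ 0 := by
        intro h0
        rw [h0] at hzq' hzp'
        exact hz ⟨by exact_mod_cast (by rw [hzq']; ring : (zq:ℝ) = 0),
          by exact_mod_cast (by rw [hzp']; ring : (zp:ℝ) = 0)⟩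
      obtain ⟨⟨a', ha'⟩, ⟨b', hb'⟩⟩ := F.int (j + 1)
      have hlamm : lam * (-1 : ℝ) ^ (j + 1) = ((zp * b' - zq * a' : ℤ) : ℝ) := by
        have hdet := F.det j
        calc lam * (-1 : ℝ) ^ (j + 1) = lam * (p j * q (j+1) - q j * p (j+1)) := by
              rw [hdet]
          _ = (lam * p j) * q (j+1) - (lam * q j) * p (j+1) := by ring
          _ = (zp : ℝ) * q (j+1) - (zq : ℝ) * p (j+1) := by rw [← hzp', ← hzq']
          _ = ((zp * b' - zq * a' : ℤ) : ℝ) := by rw [ha', hb']; push_cast; ring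
      have habs : 1 ≤ |lam| := by
        have hm0 : (zp * b' - zq * a' : ℤ) ≠ 0 := by
          intro h0
          rw [h0] at hlamm
          have hpow : (-1 : ℝ) ^ (j + 1) ≠ 0 := by
            apply pow_ne_zero; norm_num
          have h00 : lam * (-1 : ℝ) ^ (j + 1) = 0 := by rw [hlamm]; norm_num
          exact hlam0 ((mul_eq_zero.1 h00).resolve_right hpow)
        have : |lam| = |((zp * b' - zq * a' : ℤ) : ℝ)| := by
          rw [← hlamm, abs_mul, abs_pow, abs_neg, abs_one, one_pow, mul_one]
        rw [this, ← Int.cast_abs]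
        exact_mod_cast Int.one_le_abs hm0
      have hXv : X = |lam| * etaF θ p q j := by
        rw [hXdef, hzq', hzp']
        rw [show θ * (lam * q j) - lam * p j = lam * (θ * q j - p j) by ring,
          abs_mul, e2 j]
      have hYv : Y = |lam| * AF θ p q j := by
        rw [hYdef, hzq', hzp']
        rw [show lam * q j + θ * (lam * p j) = lam * (q j + θ * p j) by ring,
          abs_mul, e1 j]
      rcases Nat.lt_or_ge j (k + 1) with hjle | hjge
      · -- j ≤ k
        have hjk : j ≤ k := by omega
        have hDj := hminD j hjk
        have hXY : DF θ p q j ≤ X * Y := by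
          rw [hXv, hYv]
          have h5 := D_le_etaA F h1 j
          have hll : 1 ≤ |lam| * |lam| := by nlinarith [habs, abs_nonneg lam]
          have hposEA : 0 ≤ etaF θ p q j * AF θ p q j :=
            (mul_pos (hepos j) (hApos j)).le
          have h6 : etaF θ p q j * AF θ p q j ≤
              (|lam| * etaF θ p q j) * (|lam| * AF θ p q j) := by
            calc etaF θ p q j * AF θ p q j
                = 1 * (etaF θ p q j * AF θ p q j) := by ring
              _ ≤ (|lam| * |lam|) * (etaF θ p q j * AF θ p q j) :=
                  mul_le_mul_of_nonneg_right hll hposEA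
              _ = (|lam| * etaF θ p q j) * (|lam| * AF θ p q j) := by ring
          linarith
        exact le_trans (le_trans (min_le_right _ _) hDj) hXY
      · -- j = k + 1 : contradiction
        exfalso
        have hj : j = k + 1 := by omega
        rw [hj] at hYv
        have : AF θ p q (k + 1) ≤ Y := by
          rw [hYv]
          nlinarith [hApos (k + 1), habs]
        linarith
    · by_cases hw : ∃ j, j ≤ k + 1 ∧ (zq : ℝ) * q j + (zp : ℝ) * p j = 0
      · -- z is parallel to w_j
        obtain ⟨j, hjk1, hEj⟩ := hw
        have hqj := hqpos j
        set lam := (zp : ℝ) / q j with hlam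
        have hzp' : (zp : ℝ) = lam * q j := by rw [hlam, div_mul_cancel₀ _ hqj.ne']
        have hzq' : (zq : ℝ) = -(lam * p j) := by
          rw [hlam]; field_simp; nlinarith [hEj]
        have hlam0 : lam ≠ 0 := by
          intro h0
          rw [h0] at hzq' hzp'
          exact hz ⟨by exact_mod_cast (by rw [hzq']; ring : (zq:ℝ) = 0),
            by exact_mod_cast (by rw [hzp']; ring : (zp:ℝ) = 0)⟩
        obtain ⟨⟨a', ha'⟩, ⟨b', hb'⟩⟩ := F.int (j + 1)
        have hlamm : lam * (-1 : ℝ) ^ (j + 1) = ((-zq * b' - zp * a' : ℤ) : ℝ) := by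
          have hdet := F.det j
          calc lam * (-1 : ℝ) ^ (j + 1) = lam * (p j * q (j+1) - q j * p (j+1)) := by
                rw [hdet]
            _ = (lam * p j) * q (j+1) - (lam * q j) * p (j+1) := by ring
            _ = (-(zq : ℝ)) * q (j+1) - (zp : ℝ) * p (j+1) := by
                rw [show (lam * p j) = -(zq:ℝ) by rw [hzq']; ring, ← hzp']
            _ = ((-zq * b' - zp * a' : ℤ) : ℝ) := by rw [ha', hb']; push_cast; ring
        have habs : 1 ≤ |lam| := by
          have hm0 : (-zq * b' - zp * a' : ℤ) ≠ 0 := by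
            intro h0
            rw [h0] at hlamm
            have hpow : (-1 : ℝ) ^ (j + 1) ≠ 0 := by
              apply pow_ne_zero; norm_num
            have h00 : lam * (-1 : ℝ) ^ (j + 1) = 0 := by rw [hlamm]; norm_num
            exact hlam0 ((mul_eq_zero.1 h00).resolve_right hpow)
          have : |lam| = |((-zq * b' - zp * a' : ℤ) : ℝ)| := by
            rw [← hlamm, abs_mul, abs_pow, abs_neg, abs_one, one_pow, mul_one]
          rw [this, ← Int.cast_abs]
          exact_mod_cast Int.one_le_abs hm0
        have hXv : X = |lam| * AF θ p q j := by
          rw [hXdef, hzq', hzp']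
          rw [show θ * -(lam * p j) - lam * q j = -(lam * (q j + θ * p j)) by ring,
            abs_neg, abs_mul, e1 j]
        have hYv : Y = |lam| * etaF θ p q j := by
          rw [hYdef, hzq', hzp']
          rw [show -(lam * p j) + θ * (lam * q j) = lam * (θ * q j - p j) by ring,
            abs_mul, e2 j]
        rcases Nat.lt_or_ge j (k + 1) with hjle | hjge
        · have hjk : j ≤ k := by omega
          have hDj := hminD j hjk
          have hXY : DF θ p q j ≤ X * Y := by
            rw [hXv, hYv]
            have h5 := D_le_etaA F h1 j
            have hll : 1 ≤ |lam| * |lam| := by nlinarith [habs, abs_nonneg lam]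
            have hposEA : 0 ≤ etaF θ p q j * AF θ p q j :=
              (mul_pos (hepos j) (hApos j)).le
            have h6 : etaF θ p q j * AF θ p q j ≤
                (|lam| * AF θ p q j) * (|lam| * etaF θ p q j) := by
              calc etaF θ p q j * AF θ p q j
                  = 1 * (etaF θ p q j * AF θ p q j) := by ring
                _ ≤ (|lam| * |lam|) * (etaF θ p q j * AF θ p q j) :=
                    mul_le_mul_of_nonneg_right hll hposEA
                _ = (|lam| * AF θ p q j) * (|lam| * etaF θ p q j) := by ring
            linarith
          exact le_trans (le_trans (min_le_right _ _) hDj) hXY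
        · exfalso
          have hj : j = k + 1 := by omega
          rw [hj] at hXv
          have : AF θ p q (k + 1) ≤ X := by
            rw [hXv]
            nlinarith [hApos (k + 1), habs]
          linarith
      · -- the main, non-parallel case
        push_neg at hv hw
        have hP' : ∀ j, j ≤ k + 1 → 2 ≤ X * AF θ p q j + Y * etaF θ p q j :=
          fun j hj => hP j (hv j hj)
        have hQ' : ∀ j, j ≤ k + 1 → 2 ≤ X * etaF θ p q j + Y * AF θ p q j :=
          fun j hj => hQ j (hw j hj)
        have hsmall : etaF θ p q (k+1) * AF θ p q (k+1) ≤ 1 := by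
          have := etaA_le F h1 h2 (k + 1)
          linarith
        -- we show 1/9 ≤ X * Y
        have main : (1/9 : ℝ) ≤ X * Y := by
          -- helper: from 1 ≤ etaF j * Z and etaF j * q (j+1) ≤ 1, get q (j+1) ≤ Z
          have hlift : ∀ j (Z : ℝ), 1 ≤ etaF θ p q j * Z → q (j + 1) ≤ Z := by
            intro j Z hZ
            have h₁ := F.eta_le j
            have h₂ := hepos j
            unfold etaF at *
            nlinarith
          by_cases hS : ∃ j, j ≤ k ∧ etaF θ p q j * Y < 1
          · set j₀ := Nat.find hS with hj₀def
            obtain ⟨hj₀k, hj₀Y⟩ := Nat.find_spec hS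
            have hXlow : 1 ≤ X * AF θ p q j₀ := by
              have := hP' j₀ (by omega)
              nlinarith [hj₀Y]
            by_cases hj00 : j₀ = 0
            · -- X ≥ 1/3
              have hA0 : AF θ p q 0 = 1 + θ := by
                unfold AF; rw [F.p0, F.q0]; ring
              have hX3 : 1 ≤ X * 3 := by
                rw [hj00] at hXlow
                rw [hA0] at hXlow
                nlinarith
              by_cases hT : ∃ i, i ≤ k ∧ etaF θ p q i * X < 1
              · set i₀ := Nat.find hT with hi₀def
                obtain ⟨hi₀k, hi₀X⟩ := Nat.find_spec hT
                have hYlow : 1 ≤ Y * AF θ p q i₀ := by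
                  have := hQ' i₀ (by omega)
                  nlinarith [hi₀X]
                by_cases hi00 : i₀ = 0
                · have hA0 : AF θ p q 0 = 1 + θ := by
                    unfold AF; rw [F.p0, F.q0]; ring
                  have hY3 : 1 ≤ Y * 3 := by
                    rw [hi00, hA0] at hYlow
                    nlinarith
                  nlinarith
                · -- i₀ ≥ 1
                  have hi₀1 : i₀ - 1 < i₀ := by omega
                  have hmin := Nat.find_min hT hi₀1
                  push_neg at hmin
                  have hXq : q i₀ ≤ X := by
                    have h := hmin (by omega)
                    have := hlift (i₀ - 1) X h
                    rwa [show i₀ - 1 + 1 = i₀ by omega] at this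
                  have hYA : 1 ≤ Y * (7 * q i₀) := by
                    have hB := A_le F h1 h2 i₀
                    nlinarith [hYlow, hY0]
                  nlinarith [hqpos i₀, hX0, hY0]
              · push_neg at hT
                have hXq : q (k + 1) ≤ X := hlift k X (hT k le_rfl)
                have hYup : 1 ≤ Y * AF θ p q (k + 1) := by
                  have h := hQ' (k + 1) le_rfl
                  have hXe : X * etaF θ p q (k + 1) < 1 := by
                    calc X * etaF θ p q (k + 1)
                        < AF θ p q (k + 1) * etaF θ p q (k + 1) :=
                          mul_lt_mul_of_pos_right hXM (hepos (k + 1))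
                      _ ≤ 1 := by linarith [hsmall]
                  linarith
                have hYA : 1 ≤ Y * (7 * q (k + 1)) := by
                  have hB := A_le F h1 h2 (k + 1)
                  nlinarith [hY0]
                nlinarith [hqpos (k + 1), hX0, hY0]
            · -- j₀ ≥ 1
              have hj₀1 : j₀ - 1 < j₀ := by omega
              have hmin := Nat.find_min hS hj₀1
              push_neg at hmin
              have hYq : q j₀ ≤ Y := by
                have h := hmin (by omega)
                have := hlift (j₀ - 1) Y h
                rwa [show j₀ - 1 + 1 = j₀ by omega] at this
              have hXA : 1 ≤ X * (7 * q j₀) := by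
                have hB := A_le F h1 h2 j₀
                nlinarith [hXlow, hX0]
              nlinarith [hqpos j₀, hX0, hY0]
          · push_neg at hS
            have hYq : q (k + 1) ≤ Y := hlift k Y (hS k le_rfl)
            have hXup : 1 ≤ X * AF θ p q (k + 1) := by
              have h := hP' (k + 1) le_rfl
              have hYe : Y * etaF θ p q (k + 1) < 1 := by
                calc Y * etaF θ p q (k + 1)
                    < AF θ p q (k + 1) * etaF θ p q (k + 1) :=
                      mul_lt_mul_of_pos_right hYM (hepos (k + 1))
                  _ ≤ 1 := by linarith [hsmall]
              linarith
            have hXA : 1 ≤ X * (7 * q (k + 1)) := by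
              have hB := A_le F h1 h2 (k + 1)
              nlinarith [hX0]
            nlinarith [hqpos (k + 1), hX0, hY0]
        exact le_trans (min_le_left _ _) main
  -- finish
  have hfin : 7 * DF θ p q k / 9 ≤ min (1/9 : ℝ) (min c (DF θ p q k)) := by
    have hD7 : DF θ p q k ≤ 1 / 7 := le_trans hDk (min_le_left _ _)
    have hDc : DF θ p q k ≤ c := le_trans hDk (min_le_right _ _)
    have hDpos := D_pos F k
    refine le_min (by linarith) (le_min (by linarith) (by linarith))
  have h7 := etaA_le F h1 h2 k
  linarith [claim]

end Key

set_option maxHeartbeats 1600000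

/-- Let `θ` be irrational with `1 < θ < 2` whose convergents `p_k/q_k` satisfy
`q_k·|q_kθ − p_k| > 3·q_{k+1}·|q_{k+1}θ − p_{k+1}|` for all sufficiently large `k`,
and set `v_k = (q_kθ − p_k, q_k + p_kθ)`. Then
`ω̂̂(Λ_θ) = sup{γ ∈ ℝ : ∃ K, ∀ k ≥ K, Π(v_k) ≤ |v_{k+1}|^(−γ)}`. -/
theorem weakUniformExpLat_eq_sup_relative_minima (θ : ℝ) (hθ : Irrational θ)
    (h1 : 1 < θ) (h2 : θ < 2)
    (p : ℕ → ℝ) (q : ℕ → ℝ)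
    (hp : p = (GenContFract.of θ).nums) (hq : q = (GenContFract.of θ).dens)
    (hcf : ∀ᶠ k : ℕ in atTop,
      q k * |q k * θ - p k| > 3 * (q (k + 1) * |q (k + 1) * θ - p (k + 1)|))
    (v : ℕ → ℝ × ℝ) (hv : ∀ k, v k = (q k * θ - p k, q k + p k * θ)) :
    weakUniformExpLat (latticeOf θ) =
      sSup {g : EReal | ∃ γ : ℝ, g = (γ : EReal) ∧
        ∃ K : ℕ, ∀ k ≥ K, latProd (v k) ≤ (latNorm (v (k + 1))) ^ (-γ)} := by
  classical
  have F := cf_facts hθ h1 h2 hp hq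
  obtain ⟨K₁, hK₁⟩ := Filter.eventually_atTop.1 hcf
  have hK : ∀ k ≥ K₁, 3 * DF θ p q (k + 1) < DF θ p q k := by
    intro k hk
    have := hK₁ k hk
    unfold DF etaF
    linarith
  -- basic facts
  have hqpos : ∀ j, (0:ℝ) < q j := fun j => zero_lt_one.trans_le (F.pos_q j)
  have hApos : ∀ j, (0:ℝ) < AF θ p q j := fun j => lt_of_lt_of_le two_pos (A_ge_two F h1 j)
  have hepos : ∀ j, (0:ℝ) < etaF θ p q j := fun j => F.eta_pos j
  have hA2 : ∀ j, (2:ℝ) ≤ AF θ p q j := A_ge_two F h1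
  -- v-lattice facts
  have hlatv : ∀ n, v n ∈ latticeOf θ := by
    intro n
    obtain ⟨⟨a, ha⟩, ⟨b, hb⟩⟩ := F.int n
    refine ⟨b, a, ?_⟩
    rw [hv n, ha, hb, Prod.mk.injEq]
    constructor <;> ring
  have hv2 : ∀ n, (2:ℝ) ≤ q n + p n * θ := by
    intro n
    have := hA2 n
    unfold AF at this
    linarith
  have hvne : ∀ n, v n ≠ 0 := by
    intro n h
    have h2' : (v n).2 = 0 := by rw [h]; rfl
    rw [hv n] at h2'
    have := hv2 n
    simp only at h2'
    linarith
  have habs2 : ∀ n, |q n + p n * θ| = AF θ p q n := by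
    intro n
    rw [abs_of_pos (by linarith [hv2 n])]
    unfold AF; ring
  have habs1 : ∀ n, |q n * θ - p n| = etaF θ p q n := fun n => rfl
  have hetale1 : ∀ n, etaF θ p q n ≤ 1 := eta_le_one F
  have hnorm : ∀ n, latNorm (v n) = AF θ p q n := by
    intro n
    rw [hv n]
    unfold latNorm
    simp only
    rw [habs1 n, habs2 n]
    exact max_eq_right (le_trans (hetale1 n) (by linarith [hA2 n]))
  have hprod : ∀ n, latProd (v n) = (etaF θ p q n * AF θ p q n) ^ ((1:ℝ)/2) := by
    intro n
    rw [hv n]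
    unfold latProd
    simp only
    rw [habs1 n, habs2 n]
  -- A is monotone and tends to infinity
  have hAmono : Monotone (AF θ p q) := monotone_nat_of_le_succ (A_mono F h1)
  have hAtop : Tendsto (AF θ p q) atTop atTop := by
    apply tendsto_atTop_atTop_of_monotone hAmono
    intro b
    obtain ⟨n, hn⟩ := A_unbounded F h1 b
    exact ⟨n, hn.le⟩
  -- finding the scale
  have hexists_k : ∀ (t : ℝ) (K : ℕ), AF θ p q K ≤ t →
      ∃ k, K ≤ k ∧ AF θ p q k ≤ t ∧ t < AF θ p q (k + 1) := by
    intro t K hKt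
    have hex : ∃ m, t < AF θ p q m := A_unbounded F h1 t
    set m := Nat.find hex with hmdef
    have hmspec : t < AF θ p q m := Nat.find_spec hex
    have hKm : K < m := by
      by_contra hcon
      push_neg at hcon
      exact absurd (le_trans (hAmono hcon) hKt) (not_le.2 hmspec)
    refine ⟨m - 1, by omega, ?_, ?_⟩
    · have := Nat.find_min hex (show m - 1 < m by omega)
      push_neg at this
      exact this
    · rwa [show m - 1 + 1 = m by omega]
  -- the square-root comparison
  have hsqrt : ∀ a b : ℝ, 0 ≤ a → 0 ≤ b → a ≤ 9 * b →
      a ^ ((1:ℝ)/2) ≤ 3 * b ^ ((1:ℝ)/2) := by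
    intro a b ha hb hab
    have h9 : ((9:ℝ) * b) ^ ((1:ℝ)/2) = 3 * b ^ ((1:ℝ)/2) := by
      rw [Real.mul_rpow (by norm_num) hb]
      congr 1
      rw [show (9:ℝ) = 3 ^ (2:ℕ) by norm_num, ← Real.rpow_natCast 3 2,
        ← Real.rpow_mul (by norm_num)]
      norm_num
    rw [← h9]
    exact Real.rpow_le_rpow ha hab (by norm_num)
  apply le_antisymm
  · -- hard direction: weakUniformExpLat ≤ sSup R
    apply sSup_le
    rintro g ⟨γ, rfl, hev⟩
    by_contra hcon
    push_neg at hcon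
    obtain ⟨γ', hγ'1, hγ'2⟩ := EReal.exists_between_coe_real hcon
    have hγ'lt : γ' < γ := by exact_mod_cast hγ'2
    refine absurd (le_sSup ?_) (not_le.2 hγ'1)
    refine ⟨γ', rfl, ?_⟩
    obtain ⟨T, hT⟩ := Filter.eventually_atTop.1 hev
    obtain ⟨K₂, hKey⟩ := key_lemma F h1 h2 hK
    -- eventually, all the needed conditions hold
    have hAshift : Tendsto (fun k => AF θ p q (k + 1)) atTop atTop :=
      hAtop.comp (tendsto_add_atTop_nat 1)
    have e1 : ∀ᶠ k : ℕ in atTop, 2 * T ≤ AF θ p q (k + 1) :=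
      hAshift.eventually_ge_atTop (2 * T)
    have e2 : ∀ᶠ k : ℕ in atTop, K₂ ≤ k := Filter.eventually_ge_atTop K₂
    have e3 : ∀ᶠ k : ℕ in atTop,
        3 * (2:ℝ) ^ γ ≤ (AF θ p q (k + 1)) ^ (γ - γ') := by
      have hpow : Tendsto (fun x : ℝ => x ^ (γ - γ')) atTop atTop :=
        tendsto_rpow_atTop (by linarith)
      exact (hpow.comp hAshift).eventually_ge_atTop (3 * (2:ℝ) ^ γ)
    obtain ⟨K₃, hK₃⟩ := Filter.eventually_atTop.1 ((e1.and e2).and e3)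
    refine ⟨K₃, fun k hk => ?_⟩
    obtain ⟨⟨hc1, hc2⟩, hc3⟩ := hK₃ k hk
    set A := AF θ p q (k + 1) with hAdef
    have hA0 : (0:ℝ) < A := hApos (k + 1)
    set t := A / 2 with htdef
    have htT : T ≤ t := by rw [htdef]; linarith
    obtain ⟨z, hzΛ, hz0, hzn, hzp⟩ := hT t htT
    obtain ⟨zq, zp, hzeq⟩ := hzΛ
    have hz0' : ¬(zq = 0 ∧ zp = 0) := by
      rintro ⟨rfl, rfl⟩
      apply hz0
      rw [hzeq]
      norm_num
    have hM : max |θ * (zq:ℝ) - (zp:ℝ)| |(zq:ℝ) + θ * (zp:ℝ)| < A := by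
      have : latNorm z = max |θ * (zq:ℝ) - (zp:ℝ)| |(zq:ℝ) + θ * (zp:ℝ)| := by
        rw [hzeq]; rfl
      rw [← this]
      calc latNorm z ≤ t := hzn
        _ < A := by rw [htdef]; linarith
    have hkey := hKey k hc2 zq zp hz0' hM
    have hzprod : latProd z =
        (|θ * (zq:ℝ) - (zp:ℝ)| * |(zq:ℝ) + θ * (zp:ℝ)|) ^ ((1:ℝ)/2) := by
      rw [hzeq]; rfl
    have step1 : latProd (v k) ≤ 3 * latProd z := by
      rw [hprod k, hzprod]
      exact hsqrt _ _ (mul_pos (hepos k) (hApos k)).le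
        (mul_nonneg (abs_nonneg _) (abs_nonneg _)) hkey
    have step2 : latProd (v k) ≤ 3 * t ^ (-γ) := by
      have h3 : (3:ℝ) * latProd z ≤ 3 * t ^ (-γ) := by linarith [hzp]
      linarith [step1]
    -- now convert 3 * t ^ (-γ) ≤ A ^ (-γ')
    have hconv : 3 * t ^ (-γ) ≤ A ^ (-γ') := by
      have ht0 : (0:ℝ) < t := by rw [htdef]; linarith
      have hA' : t ^ (-γ) = A ^ (-γ) * (2:ℝ) ^ γ := by
        rw [htdef, Real.div_rpow hA0.le (by norm_num)]
        rw [Real.rpow_neg (by norm_num : (0:ℝ) ≤ 2)]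
        field_simp
      have hsplit : A ^ (-γ) = A ^ (γ' - γ) * A ^ (-γ') := by
        rw [← Real.rpow_add hA0]
        congr 1
        ring
      have hinv : A ^ (γ' - γ) = (A ^ (γ - γ'))⁻¹ := by
        rw [← Real.rpow_neg hA0.le]
        congr 1
        ring
      have hApow : (0:ℝ) < A ^ (γ - γ') := Real.rpow_pos_of_pos hA0 _
      have hle1 : 3 * (2:ℝ) ^ γ * (A ^ (γ - γ'))⁻¹ ≤ 1 := by
        rw [← div_eq_mul_inv, div_le_one hApow]
        exact hc3
      have hrpn : (0:ℝ) ≤ A ^ (-γ') := (Real.rpow_pos_of_pos hA0 _).le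
      calc 3 * t ^ (-γ) = (3 * (2:ℝ) ^ γ * (A ^ (γ - γ'))⁻¹) * A ^ (-γ') := by
            rw [hA', hsplit, hinv]; ring
        _ ≤ 1 * A ^ (-γ') := mul_le_mul_of_nonneg_right hle1 hrpn
        _ = A ^ (-γ') := one_mul _
    rw [hnorm (k + 1)]
    linarith [step2, hconv]
  · -- easy direction: sSup R ≤ weakUniformExpLat
    apply sSup_le
    rintro g ⟨γ, rfl, K, hKγ⟩
    rcases le_or_gt 0 γ with hγ0 | hγ0
    · apply le_sSup
      refine ⟨γ, rfl, ?_⟩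
      refine Filter.eventually_atTop.2 ⟨max (AF θ p q K) 1, fun t ht => ?_⟩
      have htA : AF θ p q K ≤ t := le_trans (le_max_left _ _) ht
      have ht1 : (1:ℝ) ≤ t := le_trans (le_max_right _ _) ht
      obtain ⟨k, hkK, hk1, hk2⟩ := hexists_k t K htA
      refine ⟨v k, hlatv k, hvne k, ?_, ?_⟩
      · rw [hnorm k]; exact hk1
      · have hmain := hKγ k hkK
        rw [hnorm (k + 1)] at hmain
        calc latProd (v k) ≤ AF θ p q (k + 1) ^ (-γ) := hmain
          _ ≤ t ^ (-γ) :=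
            Real.rpow_le_rpow_of_nonpos (by linarith) hk2.le (by linarith)
    · -- γ < 0 : compare with 0 which is in the left set
      have h0mem : (0 : EReal) ∈ {g : EReal | ∃ γ : ℝ, g = (γ : EReal) ∧
          ∀ᶠ t : ℝ in atTop, ∃ z ∈ latticeOf θ, z ≠ 0 ∧ latNorm z ≤ t ∧
            latProd z ≤ t ^ (-γ)} := by
        refine ⟨0, by norm_num, ?_⟩
        obtain ⟨N', hN'⟩ := D_small F hK (1/7) (by norm_num)
        have hsm : etaF θ p q N' * AF θ p q N' ≤ 1 := by
          have := etaA_le F h1 h2 N'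
          have := hN' N' le_rfl
          linarith
        refine Filter.eventually_atTop.2 ⟨AF θ p q N', fun t ht => ?_⟩
        refine ⟨v N', hlatv N', hvne N', ?_, ?_⟩
        · rw [hnorm N']; exact ht
        · rw [hprod N']
          have h1' : (etaF θ p q N' * AF θ p q N') ^ ((1:ℝ)/2) ≤ 1 :=
            Real.rpow_le_one (mul_pos (hepos N') (hApos N')).le hsm (by norm_num)
          have ht0 : (0:ℝ) < t := lt_of_lt_of_le (by linarith [hA2 N']) ht
          rw [neg_zero, Real.rpow_zero]
          exact h1'
      calc (γ : EReal) ≤ (0 : EReal) := by exact_mod_cast hγ0.le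
        _ ≤ _ := le_sSup h0mem
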